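/- arXiv:2508.19968 — 2 statements merged into one kernel-verified Lean document; each statement's English description precedes it below -/
import Mathlib

section
/- In the coherent-state setting, for every f ∈ L¹(Z) and p ∈ [1,∞], ‖Op[f]‖_{S^p} ≤ d_m^{1/p} ‖f‖_{L^p}, and for every operator T, ‖Hus[T]‖_{L^p} ≤ d_m^{-1/p} ‖T‖_{S^p}, where ‖·‖_{S^p} is the Schatten p-norm on End(H), d_m = dim H. -/
open MeasureTheory
open scoped BigOperators Matrix ComplexOrder ENNReal

/-- The old `Matrix.PosSemidef.sqrt` (removed from Mathlib), spelled out. -/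
noncomputable def posSemidefSqrtOld {N : ℕ} {A : Matrix (Fin N) (Fin N) ℂ} (hA : A.PosSemidef) :
    Matrix (Fin N) (Fin N) ℂ :=
  (hA.1.eigenvectorUnitary : Matrix (Fin N) (Fin N) ℂ) *
    Matrix.diagonal ((↑) ∘ Real.sqrt ∘ hA.1.eigenvalues) *
    (star hA.1.eigenvectorUnitary : Matrix (Fin N) (Fin N) ℂ)

theorem posSemidefSqrtOld_isHermitian {N : ℕ} {A : Matrix (Fin N) (Fin N) ℂ}
    (hA : A.PosSemidef) : (posSemidefSqrtOld hA).IsHermitian := by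
  unfold posSemidefSqrtOld
  rw [Matrix.star_eq_conjTranspose]
  exact Matrix.isHermitian_mul_mul_conjTranspose _
    (Matrix.isHermitian_diagonal_of_self_adjoint _ (by funext i; simp))

/-- Singular values of M: the eigenvalues of |M| = √(MᴴM). -/
noncomputable def singularValues {N : ℕ} (M : Matrix (Fin N) (Fin N) ℂ) : Fin N → ℝ :=
  (posSemidefSqrtOld_isHermitian (Matrix.posSemidef_conjTranspose_mul_self M)).eigenvalues

/-- The Schatten p-norm of a matrix, 1 ≤ p ≤ ∞. -/
noncomputable def schattenNorm {N : ℕ} (p : ℝ≥0∞) (M : Matrix (Fin N) (Fin N) ℂ) : ℝ :=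
  if p = ⊤ then ⨆ i, singularValues M i
  else (∑ i, singularValues M i ^ p.toReal) ^ (1 / p.toReal)

theorem posSemidefSqrtOld_posSemidef {N : ℕ} {A : Matrix (Fin N) (Fin N) ℂ}
    (hA : A.PosSemidef) : (posSemidefSqrtOld hA).PosSemidef := by
  unfold posSemidefSqrtOld
  rw [Matrix.star_eq_conjTranspose]
  refine Matrix.PosSemidef.mul_mul_conjTranspose_same ?_ _
  rw [Matrix.posSemidef_diagonal_iff]
  intro i
  simp only [Function.comp_apply]
  exact_mod_cast Real.sqrt_nonneg _

theorem posSemidefSqrtOld_mul_self {N : ℕ} {A : Matrix (Fin N) (Fin N) ℂ}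
    (hA : A.PosSemidef) : posSemidefSqrtOld hA * posSemidefSqrtOld hA = A := by
  have hU : (star hA.1.eigenvectorUnitary : Matrix (Fin N) (Fin N) ℂ) *
      (hA.1.eigenvectorUnitary : Matrix (Fin N) (Fin N) ℂ) = 1 :=
    Unitary.coe_star_mul_self _
  have hD : Matrix.diagonal (((↑) ∘ Real.sqrt ∘ hA.1.eigenvalues : Fin N → ℂ)) *
      Matrix.diagonal ((↑) ∘ Real.sqrt ∘ hA.1.eigenvalues) =
      Matrix.diagonal (RCLike.ofReal ∘ hA.1.eigenvalues) := by
    rw [Matrix.diagonal_mul_diagonal]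
    congr 1
    funext i
    simp only [Function.comp_apply]
    rw [← Complex.ofReal_mul, Real.mul_self_sqrt (hA.eigenvalues_nonneg i)]
    rfl
  unfold posSemidefSqrtOld
  conv_rhs => rw [hA.1.spectral_theorem]
  simp only [Unitary.conjStarAlgAut_apply, Matrix.mul_assoc]
  rw [← Matrix.mul_assoc (star _ : Matrix (Fin N) (Fin N) ℂ) _, hU, Matrix.one_mul,
    ← Matrix.mul_assoc (Matrix.diagonal _), hD]

theorem EuclideanSpace.inner_piLp_equiv_symm {N : ℕ} (x y : Fin N → ℂ) :
    inner ℂ ((WithLp.equiv 2 (Fin N → ℂ)).symm x) ((WithLp.equiv 2 (Fin N → ℂ)).symm y) =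
      star x ⬝ᵥ y := by
  rw [WithLp.equiv_symm_apply, EuclideanSpace.inner_toLp_toLp, dotProduct_comm]

set_option linter.unusedSectionVars false
set_option maxHeartbeats 1000000
noncomputable def eunorm {N : ℕ} (v : Fin N → ℂ) : ℝ :=
  ‖(WithLp.equiv 2 (Fin N → ℂ)).symm v‖



lemma singularValues_nonneg {N : ℕ} (M : Matrix (Fin N) (Fin N) ℂ) (i : Fin N) :
    0 ≤ singularValues M i :=
  (posSemidefSqrtOld_posSemidef (Matrix.posSemidef_conjTranspose_mul_self M)).eigenvalues_nonneg i

lemma dot_aux {N : ℕ} (A : Matrix (Fin N) (Fin N) ℂ) (x y : Fin N → ℂ) :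
    star (A *ᵥ x) ⬝ᵥ (A *ᵥ y) = star x ⬝ᵥ ((Aᴴ * A) *ᵥ y) := by
  rw [Matrix.star_mulVec, Matrix.dotProduct_mulVec, Matrix.vecMul_vecMul,
    ← Matrix.dotProduct_mulVec]

lemma exists_svd {N : ℕ} (A : Matrix (Fin N) (Fin N) ℂ) :
    ∃ (b w : OrthonormalBasis (Fin N) ℂ (EuclideanSpace ℂ (Fin N))),
      ∀ i, A *ᵥ ⇑(w i) = (singularValues A i : ℂ) • ⇑(b i) := by
  have hPSD := Matrix.posSemidef_conjTranspose_mul_self A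
  set B := posSemidefSqrtOld hPSD with hBdef
  have hB := posSemidefSqrtOld_posSemidef hPSD
  have hBB : Bᴴ * B = Aᴴ * A := by
    rw [hB.1]; exact posSemidefSqrtOld_mul_self hPSD
  set w := hB.1.eigenvectorBasis with hwdef
  set s := singularValues A with hsdef
  have hs : s = hB.1.eigenvalues := rfl
  have hsnn : ∀ i, 0 ≤ s i := fun i => singularValues_nonneg A i
  have hmul : ∀ i, B *ᵥ ⇑(w i) = (s i : ℂ) • ⇑(w i) := by
    intro i
    rw [hB.1.mulVec_eigenvectorBasis, hs]
    funext j
    simp [Complex.real_smul]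
    exact Or.inl rfl
  have key : ∀ x y : Fin N → ℂ, star (A *ᵥ x) ⬝ᵥ (A *ᵥ y) = star (B *ᵥ x) ⬝ᵥ (B *ᵥ y) := by
    intro x y
    rw [dot_aux, dot_aux, hBB]
  have keyw : ∀ i j, star (A *ᵥ ⇑(w i)) ⬝ᵥ (A *ᵥ ⇑(w j)) =
      ((s i : ℂ) * s j) * (if i = j then 1 else 0) := by
    intro i j
    rw [key, hmul i, hmul j]
    have horth := w.orthonormal
    rw [orthonormal_iff_ite] at horth
    have hwij : star ⇑(w i) ⬝ᵥ ⇑(w j) = (if i = j then 1 else 0 : ℂ) := by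
      rw [dotProduct_comm, ← EuclideanSpace.inner_eq_star_dotProduct]
      exact horth i j
    simp only [star_smul, smul_dotProduct, dotProduct_smul, Complex.star_def,
      Complex.conj_ofReal, smul_eq_mul, hwij]
    ring
  classical
  set S : Set (Fin N) := {i | s i ≠ 0} with hSdef
  set u : Fin N → EuclideanSpace ℂ (Fin N) := fun i =>
    ((s i : ℂ))⁻¹ • (WithLp.equiv 2 (Fin N → ℂ)).symm (A *ᵥ ⇑(w i)) with hudef
  have hinner : ∀ i j, (inner ℂ (u i) (u j) : ℂ) =
      ((s i : ℂ))⁻¹ * ((s j : ℂ))⁻¹ * (((s i : ℂ) * s j) * (if i = j then 1 else 0)) := by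
    intro i j
    rw [hudef]
    simp only [inner_smul_left, inner_smul_right, EuclideanSpace.inner_piLp_equiv_symm, keyw i j,
      Complex.star_def, map_inv₀, Complex.conj_ofReal]
    ring
  have horthS : Orthonormal ℂ (S.restrict u) := by
    rw [orthonormal_iff_ite]
    rintro ⟨i, hi⟩ ⟨j, hj⟩
    rw [show S.restrict u ⟨i, hi⟩ = u i from rfl, show S.restrict u ⟨j, hj⟩ = u j from rfl, hinner i j]
    by_cases h : i = j
    · subst h
      simp only [if_pos rfl, Subtype.mk_eq_mk, mul_one]
      have : (s i : ℂ) ≠ 0 := by exact_mod_cast hi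
      field_simp
    · have : (⟨i, hi⟩ : S) ≠ ⟨j, hj⟩ := by simpa using h
      rw [if_neg h, if_neg this]
      ring
  obtain ⟨b, hb⟩ := horthS.exists_orthonormalBasis_extension_of_card_eq
    (by simp : Module.finrank ℂ (EuclideanSpace ℂ (Fin N)) = Fintype.card (Fin N))
  refine ⟨b, w, fun i => ?_⟩
  by_cases hi : i ∈ S
  · have hbi := hb i hi
    rw [hbi, hudef]
    have hsi : (s i : ℂ) ≠ 0 := by exact_mod_cast hi
    simp only [WithLp.ofLp_smul, WithLp.equiv_symm_apply, WithLp.ofLp_toLp, smul_smul, mul_inv_cancel₀ hsi, one_smul]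
  · have hsi : s i = 0 := by simpa [hSdef] using hi
    have hz : A *ᵥ ⇑(w i) = 0 := by
      have h0 : star (A *ᵥ ⇑(w i)) ⬝ᵥ (A *ᵥ ⇑(w i)) = 0 := by
        rw [keyw i i, hsi]; simp
      set v := A *ᵥ ⇑(w i) with hv
      have h1 : (↑(∑ j, Complex.normSq (v j)) : ℂ) = 0 := by
        rw [← h0, dotProduct]
        push_cast
        refine Finset.sum_congr rfl fun j _ => ?_
        simp [dotProduct, Pi.star_apply, Complex.star_def, Complex.normSq_eq_conj_mul_self]
      have h2 : ∑ j, Complex.normSq (v j) = 0 := by exact_mod_cast h1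
      funext j
      have := (Finset.sum_eq_zero_iff_of_nonneg (fun j _ => Complex.normSq_nonneg (v j))).mp h2 j (Finset.mem_univ j)
      simpa using Complex.normSq_eq_zero.mp this
    rw [hz, hsi]
    simp

lemma onb_dual {N : ℕ} (b : OrthonormalBasis (Fin N) ℂ (EuclideanSpace ℂ (Fin N)))
    (i j : Fin N) : ∑ k, ⇑(b k) j * star (⇑(b k) i) = if j = i then (1:ℂ) else 0 := by
  classical
  set U : Matrix (Fin N) (Fin N) ℂ := Matrix.of (fun i k => ⇑(b k) i) with hU
  have h1 : Uᴴ * U = 1 := by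
    ext k l
    have := orthonormal_iff_ite.mp b.orthonormal k l
    rw [EuclideanSpace.inner_eq_star_dotProduct, dotProduct_comm] at this
    simpa [Matrix.mul_apply, Matrix.conjTranspose_apply, Matrix.one_apply, hU,
      dotProduct] using this
  have h2 : U * Uᴴ = 1 := mul_eq_one_comm.mp h1
  simpa [Matrix.mul_apply, Matrix.conjTranspose_apply, Matrix.one_apply, hU] using
    congrFun (congrFun h2 j) i

lemma onb_trace {N : ℕ} (b : OrthonormalBasis (Fin N) ℂ (EuclideanSpace ℂ (Fin N)))
    (M : Matrix (Fin N) (Fin N) ℂ) :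
    ∑ k, star ⇑(b k) ⬝ᵥ (M *ᵥ ⇑(b k)) = M.trace := by
  classical
  have : ∀ k, star ⇑(b k) ⬝ᵥ (M *ᵥ ⇑(b k)) = ∑ i, ∑ j, M i j * (⇑(b k) j * star (⇑(b k) i)) := by
    intro k
    simp only [dotProduct, Matrix.mulVec, dotProduct, Finset.mul_sum, Pi.star_apply]
    exact Finset.sum_congr rfl fun i _ => Finset.sum_congr rfl fun j _ => by ring
  rw [Finset.sum_congr rfl fun k _ => this k]
  rw [Finset.sum_comm]
  rw [Matrix.trace]
  refine Finset.sum_congr rfl fun i _ => ?_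
  rw [Finset.sum_comm]
  have : ∀ j, ∑ k, M i j * (⇑(b k) j * star (⇑(b k) i)) = M i j * ∑ k, ⇑(b k) j * star (⇑(b k) i) := by
    intro j; rw [Finset.mul_sum]
  rw [Finset.sum_congr rfl fun j _ => this j]
  simp only [onb_dual b]
  simp [Matrix.diag]

lemma eunorm_nonneg {N : ℕ} (v : Fin N → ℂ) : 0 ≤ eunorm v := norm_nonneg _

section Proj
variable {N : ℕ} {Q : Matrix (Fin N) (Fin N) ℂ} (hQ : Qᴴ = Q) (h2 : Q * Q = Q)
include hQ h2

lemma proj_dot_eq (x y : Fin N → ℂ) :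
    star x ⬝ᵥ (Q *ᵥ y) = (inner ℂ ((WithLp.equiv 2 (Fin N → ℂ)).symm (Q *ᵥ x))
      ((WithLp.equiv 2 (Fin N → ℂ)).symm (Q *ᵥ y)) : ℂ) := by
  rw [EuclideanSpace.inner_piLp_equiv_symm, dot_aux, hQ, h2]

lemma proj_dot_self (x : Fin N → ℂ) :
    star x ⬝ᵥ (Q *ᵥ x) = ((eunorm (Q *ᵥ x) ^ 2 : ℝ) : ℂ) := by
  rw [proj_dot_eq hQ h2, eunorm]
  rw [inner_self_eq_norm_sq_to_K]
  norm_num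

lemma proj_dot_le (x y : Fin N → ℂ) :
    ‖star x ⬝ᵥ (Q *ᵥ y)‖ ≤ eunorm (Q *ᵥ x) * eunorm (Q *ᵥ y) := by
  rw [proj_dot_eq hQ h2]
  exact norm_inner_le_norm _ _

lemma proj_dot_le' (x y : Fin N → ℂ) :
    ‖star x ⬝ᵥ (Q *ᵥ y)‖ ≤ (eunorm (Q *ᵥ x) ^ 2 + eunorm (Q *ᵥ y) ^ 2) / 2 := by
  refine (proj_dot_le hQ h2 x y).trans ?_
  nlinarith [sq_nonneg (eunorm (Q *ᵥ x) - eunorm (Q *ᵥ y))]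

lemma proj_norm_le (x : Fin N → ℂ) : eunorm (Q *ᵥ x) ≤ eunorm x := by
  have h := proj_dot_self hQ h2 x
  have hle : eunorm (Q *ᵥ x) ^ 2 = Complex.re (star x ⬝ᵥ (Q *ᵥ x)) := by
    rw [h]
    norm_cast
  have hcs : Complex.re (star x ⬝ᵥ (Q *ᵥ x)) ≤ eunorm x * eunorm (Q *ᵥ x) := by
    have : star x ⬝ᵥ (Q *ᵥ x) = (inner ℂ ((WithLp.equiv 2 (Fin N → ℂ)).symm x)
        ((WithLp.equiv 2 (Fin N → ℂ)).symm (Q *ᵥ x)) : ℂ) :=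
      (EuclideanSpace.inner_piLp_equiv_symm _ _).symm
    rw [this]
    exact (RCLike.re_le_norm (K := ℂ) _).trans (norm_inner_le_norm (𝕜 := ℂ) _ _)
  nlinarith [eunorm_nonneg (Q *ᵥ x), eunorm_nonneg x, hle ▸ hcs]
end Proj

/-- Finite-sum Hölder/Jensen: `(∑ s c)^p ≤ (∑ s^p c) (∑ c)^(p-1)` for nonneg. -/
lemma sum_holder {n : ℕ} {pR : ℝ} (hp : 1 ≤ pR) (s c : Fin n → ℝ)
    (hs : ∀ k, 0 ≤ s k) (hc0 : ∀ k, 0 ≤ c k) :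
    (∑ k, s k * c k) ^ pR ≤ (∑ k, s k ^ pR * c k) * (∑ k, c k) ^ (pR - 1) := by
  rcases eq_or_lt_of_le hp with heq | hlt
  · rw [← heq]
    simp only [Real.rpow_one, sub_self, Real.rpow_zero, mul_one]
    exact le_of_eq (Finset.sum_congr rfl fun k _ => by simp)
  · have hpq : pR.HolderConjugate (Real.conjExponent pR) := Real.HolderConjugate.conjExponent hlt
    set qR := Real.conjExponent pR with hq
    have h1 : ∀ k, s k * c k = (s k * c k ^ pR⁻¹) * c k ^ qR⁻¹ := by
      intro k
      rw [mul_assoc, ← Real.rpow_add' (hc0 k) (by rw [hpq.inv_add_inv_eq_one]; norm_num),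
        hpq.inv_add_inv_eq_one, Real.rpow_one]
    calc (∑ k, s k * c k) ^ pR
        = (∑ k, (s k * c k ^ pR⁻¹) * c k ^ qR⁻¹) ^ pR := by
          rw [Finset.sum_congr rfl fun k _ => h1 k]
      _ ≤ ((∑ k, |s k * c k ^ pR⁻¹| ^ pR) ^ (1/pR) * (∑ k, |c k ^ qR⁻¹| ^ qR) ^ (1/qR)) ^ pR := by
          refine Real.rpow_le_rpow ?_ (Real.inner_le_Lp_mul_Lq _ _ _ hpq) (by linarith)
          exact Finset.sum_nonneg fun k _ => mul_nonneg (mul_nonneg (hs k)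
            (Real.rpow_nonneg (hc0 k) _)) (Real.rpow_nonneg (hc0 k) _)
      _ ≤ (∑ k, s k ^ pR * c k) * (∑ k, c k) ^ (pR - 1) := by
          have e1 : ∀ k, |s k * c k ^ pR⁻¹| ^ pR = s k ^ pR * c k := by
            intro k
            rw [abs_of_nonneg (mul_nonneg (hs k) (Real.rpow_nonneg (hc0 k) _)),
              Real.mul_rpow (hs k) (Real.rpow_nonneg (hc0 k) _),
              ← Real.rpow_mul (hc0 k), inv_mul_cancel₀ (by linarith : pR ≠ 0), Real.rpow_one]
          have e2 : ∀ k, |c k ^ qR⁻¹| ^ qR = c k := by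
            intro k
            rw [abs_of_nonneg (Real.rpow_nonneg (hc0 k) _), ← Real.rpow_mul (hc0 k),
              inv_mul_cancel₀ hpq.symm.pos.ne', Real.rpow_one]
          rw [Finset.sum_congr rfl fun k _ => e1 k, Finset.sum_congr rfl fun k _ => e2 k]
          have hX : (0:ℝ) ≤ ∑ k, s k ^ pR * c k :=
            Finset.sum_nonneg fun k _ => mul_nonneg (Real.rpow_nonneg (hs k) _) (hc0 k)
          have hY : (0:ℝ) ≤ ∑ k, c k := Finset.sum_nonneg fun k _ => hc0 k
          rw [Real.mul_rpow (Real.rpow_nonneg hX _) (Real.rpow_nonneg hY _),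
            ← Real.rpow_mul hX, ← Real.rpow_mul hY]
          have hq1 : 1 / pR * pR = 1 := by field_simp
          have hq2 : 1 / qR * pR = pR - 1 := by
            have h := hpq.sub_one_mul_conj
            have hqne : qR ≠ 0 := hpq.symm.pos.ne'
            field_simp
            linarith [h]
          rw [hq1, hq2, Real.rpow_one]

/-- Integral Hölder/Jensen: `(∫ F G)^p ≤ (∫ F^p G) (∫ G)^(p-1)` for `0 ≤ F`, `0 ≤ G ≤ 1`. -/
lemma integral_holder {Z : Type*} [MeasurableSpace Z] {μ : Measure Z} [IsFiniteMeasure μ]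
    {pR : ℝ} (hp : 1 ≤ pR) {F G : Z → ℝ}
    (hF0 : ∀ z, 0 ≤ F z) (hG0 : ∀ z, 0 ≤ G z) (hG1 : ∀ z, G z ≤ 1)
    (hFmem : MemLp F (ENNReal.ofReal pR) μ) (hGm : AEStronglyMeasurable G μ) :
    (∫ z, F z * G z ∂μ) ^ pR ≤ (∫ z, F z ^ pR * G z ∂μ) * (∫ z, G z ∂μ) ^ (pR - 1) := by
  rcases eq_or_lt_of_le hp with heq | hlt
  · rw [← heq]
    simp only [Real.rpow_one, sub_self, Real.rpow_zero, mul_one]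
    exact le_of_eq (integral_congr_ae (Filter.Eventually.of_forall fun z => by simp))
  · have hpq : pR.HolderConjugate (Real.conjExponent pR) := Real.HolderConjugate.conjExponent hlt
    set qR := Real.conjExponent pR with hq
    have hGp : ∀ (c : ℝ), 0 ≤ c → AEStronglyMeasurable (fun z => G z ^ c) μ :=
      fun c hc => (Real.continuous_rpow_const hc).comp_aestronglyMeasurable hGm
    have hGple : ∀ (c : ℝ), 0 ≤ c → ∀ z, G z ^ c ≤ 1 :=
      fun c hc z => Real.rpow_le_one (hG0 z) (hG1 z) hc
    have hφm : AEStronglyMeasurable (fun z => F z * G z ^ pR⁻¹) μ :=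
      hFmem.1.mul (hGp _ (by positivity))
    have hφmem : MemLp (fun z => F z * G z ^ pR⁻¹) (ENNReal.ofReal pR) μ := by
      refine hFmem.of_le hφm (Filter.Eventually.of_forall fun z => ?_)
      rw [Real.norm_eq_abs, Real.norm_eq_abs, abs_of_nonneg (hF0 z),
        abs_of_nonneg (mul_nonneg (hF0 z) (Real.rpow_nonneg (hG0 z) _))]
      exact mul_le_of_le_one_right (hF0 z) (hGple _ (by positivity) z)
    have hψmem : MemLp (fun z => G z ^ qR⁻¹) (ENNReal.ofReal qR) μ := by
      have hqnn : (0:ℝ) ≤ qR⁻¹ := le_of_lt (inv_pos.mpr hpq.symm.pos)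
      refine MemLp.of_bound (hGp _ hqnn) 1
        (Filter.Eventually.of_forall fun z => ?_)
      rw [Real.norm_eq_abs, abs_of_nonneg (Real.rpow_nonneg (hG0 z) _)]
      exact hGple _ hqnn z
    have key := integral_mul_le_Lp_mul_Lq_of_nonneg hpq
      (Filter.Eventually.of_forall fun z => mul_nonneg (hF0 z) (Real.rpow_nonneg (hG0 z) _))
      (Filter.Eventually.of_forall fun z => Real.rpow_nonneg (hG0 z) _) hφmem hψmem
    have h1 : ∀ z, (F z * G z ^ pR⁻¹) * G z ^ qR⁻¹ = F z * G z := by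
      intro z
      rw [mul_assoc, ← Real.rpow_add' (hG0 z) (by rw [hpq.inv_add_inv_eq_one]; norm_num),
        hpq.inv_add_inv_eq_one, Real.rpow_one]
    have e1 : ∀ z, (F z * G z ^ pR⁻¹) ^ pR = F z ^ pR * G z := by
      intro z
      rw [Real.mul_rpow (hF0 z) (Real.rpow_nonneg (hG0 z) _), ← Real.rpow_mul (hG0 z),
        inv_mul_cancel₀ (by linarith : pR ≠ 0), Real.rpow_one]
    have e2 : ∀ z, (G z ^ qR⁻¹) ^ qR = G z := by
      intro z
      rw [← Real.rpow_mul (hG0 z), inv_mul_cancel₀ hpq.symm.pos.ne', Real.rpow_one]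
    rw [integral_congr_ae (Filter.Eventually.of_forall h1),
      integral_congr_ae (Filter.Eventually.of_forall e1),
      integral_congr_ae (Filter.Eventually.of_forall e2)] at key
    have hFG0 : (0:ℝ) ≤ ∫ z, F z * G z ∂μ :=
      integral_nonneg fun z => mul_nonneg (hF0 z) (hG0 z)
    have hX : (0:ℝ) ≤ ∫ z, F z ^ pR * G z ∂μ :=
      integral_nonneg fun z => mul_nonneg (Real.rpow_nonneg (hF0 z) _) (hG0 z)
    have hY : (0:ℝ) ≤ ∫ z, G z ∂μ := integral_nonneg fun z => hG0 z
    calc (∫ z, F z * G z ∂μ) ^ pR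
        ≤ ((∫ z, F z ^ pR * G z ∂μ) ^ (1/pR) * (∫ z, G z ∂μ) ^ (1/qR)) ^ pR :=
          Real.rpow_le_rpow hFG0 key (by linarith)
      _ = (∫ z, F z ^ pR * G z ∂μ) * (∫ z, G z ∂μ) ^ (pR - 1) := by
          rw [Real.mul_rpow (Real.rpow_nonneg hX _) (Real.rpow_nonneg hY _),
            ← Real.rpow_mul hX, ← Real.rpow_mul hY]
          have hq1 : 1 / pR * pR = 1 := by field_simp
          have hq2 : 1 / qR * pR = pR - 1 := by
            have h := hpq.sub_one_mul_conj
            have hqne : qR ≠ 0 := hpq.symm.pos.ne'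
            field_simp
            linarith [h]
          rw [hq1, hq2, Real.rpow_one]


section Plumb
variable {N : ℕ}

lemma eunorm_coe (v : EuclideanSpace ℂ (Fin N)) :
    eunorm ((WithLp.equiv 2 (Fin N → ℂ)) v) = ‖v‖ := by
  simp [eunorm]

lemma eunorm_onb (b : OrthonormalBasis (Fin N) ℂ (EuclideanSpace ℂ (Fin N))) (k : Fin N) :
    eunorm ⇑(b k) = 1 := by
  show eunorm ((WithLp.equiv 2 (Fin N → ℂ)) (b k)) = 1
  rw [eunorm_coe]
  exact b.orthonormal.1 k

lemma dot_self_eq (x : Fin N → ℂ) : star x ⬝ᵥ x = ((eunorm x ^ 2 : ℝ) : ℂ) := by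
  have : star x ⬝ᵥ x = (inner ℂ ((WithLp.equiv 2 (Fin N → ℂ)).symm x)
      ((WithLp.equiv 2 (Fin N → ℂ)).symm x) : ℂ) :=
    (EuclideanSpace.inner_piLp_equiv_symm x x).symm
  rw [this, inner_self_eq_norm_sq_to_K, eunorm]
  norm_num

lemma entry_eq (M : Matrix (Fin N) (Fin N) ℂ) (j k : Fin N) :
    M j k = star (Pi.single j (1:ℂ)) ⬝ᵥ (M *ᵥ Pi.single k 1) := by
  simp [dotProduct, Matrix.mulVec, Pi.single_apply, Finset.sum_ite_eq,
    Finset.mem_univ, dotProduct]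

lemma eunorm_single (j : Fin N) : eunorm (Pi.single j (1:ℂ)) = 1 := by
  have : (WithLp.equiv 2 (Fin N → ℂ)).symm (Pi.single j (1:ℂ)) =
      EuclideanSpace.single j (1:ℂ) := rfl
  rw [eunorm, this, EuclideanSpace.norm_single]
  norm_num

lemma q_expand (M : Matrix (Fin N) (Fin N) ℂ) (x y : Fin N → ℂ) :
    star x ⬝ᵥ (M *ᵥ y) = ∑ j, ∑ k, star (x j) * y k * M j k := by
  simp only [dotProduct, Matrix.mulVec, Pi.star_apply, Finset.mul_sum]
  exact Finset.sum_congr rfl fun j _ => Finset.sum_congr rfl fun k _ => by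
    simp [dotProduct]; ring

variable {Z : Type*} [MeasurableSpace Z] {μ : Measure Z} [IsProbabilityMeasure μ]
  {P : Z → Matrix (Fin N) (Fin N) ℂ}

lemma q_int (hint : ∀ i j, Integrable (fun z => P z i j) μ) (x y : Fin N → ℂ) :
    Integrable (fun z => star x ⬝ᵥ (P z *ᵥ y)) μ := by
  have : (fun z => star x ⬝ᵥ (P z *ᵥ y)) =
      fun z => ∑ j, ∑ k, star (x j) * y k * P z j k := by
    funext z; exact q_expand (P z) x y
  rw [this]
  exact integrable_finset_sum _ fun j _ => integrable_finset_sum _ fun k _ =>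
    (hint j k).const_mul _

lemma q_integral (hint : ∀ i j, Integrable (fun z => P z i j) μ)
    (hres : ∀ i j, ∫ z, P z i j ∂μ = ((N : ℂ))⁻¹ * (1 : Matrix (Fin N) (Fin N) ℂ) i j)
    (x y : Fin N → ℂ) :
    ∫ z, star x ⬝ᵥ (P z *ᵥ y) ∂μ = (N:ℂ)⁻¹ * (star x ⬝ᵥ y) := by
  classical
  rw [integral_congr_ae (Filter.Eventually.of_forall fun z => q_expand (P z) x y)]
  rw [integral_finset_sum _ fun j _ => integrable_finset_sum _ fun k _ => (hint j k).const_mul _]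
  have : ∀ j, ∫ z, ∑ k, star (x j) * y k * P z j k ∂μ
      = ∑ k, star (x j) * y k * ((N:ℂ)⁻¹ * (1 : Matrix (Fin N) (Fin N) ℂ) j k) := by
    intro j
    rw [integral_finset_sum _ fun k _ => (hint j k).const_mul _]
    exact Finset.sum_congr rfl fun k _ => by rw [MeasureTheory.integral_const_mul, hres j k]
  rw [Finset.sum_congr rfl fun j _ => this j]
  simp only [Matrix.one_apply, mul_ite, mul_one, mul_zero, Finset.sum_ite_eq',
    Finset.mem_univ, if_true]
  rw [dotProduct, Finset.mul_sum]
  exact Finset.sum_congr rfl fun j _ => by simp [dotProduct]; ring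
end Plumb

section Plumb2
variable {N : ℕ} {Z : Type*} [MeasurableSpace Z] {μ : Measure Z} [IsProbabilityMeasure μ]
  {P : Z → Matrix (Fin N) (Fin N) ℂ}

lemma m_eq (hherm : ∀ z, (P z).IsHermitian) (hidem : ∀ z, P z * P z = P z)
    (z : Z) (x : Fin N → ℂ) :
    ((eunorm (P z *ᵥ x) ^ 2 : ℝ) : ℂ) = star x ⬝ᵥ (P z *ᵥ x) :=
  (proj_dot_self (hherm z) (hidem z) x).symm

lemma m_int (hherm : ∀ z, (P z).IsHermitian) (hidem : ∀ z, P z * P z = P z)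
    (hint : ∀ i j, Integrable (fun z => P z i j) μ) (x : Fin N → ℂ) :
    Integrable (fun z => eunorm (P z *ᵥ x) ^ 2) μ := by
  refine ((q_int hint x x).re).congr (Filter.Eventually.of_forall fun z => ?_)
  simp only [RCLike.re_eq_complex_re, ← m_eq hherm hidem z x, Complex.ofReal_re]

lemma m_integral (hherm : ∀ z, (P z).IsHermitian) (hidem : ∀ z, P z * P z = P z)
    (hint : ∀ i j, Integrable (fun z => P z i j) μ)
    (hres : ∀ i j, ∫ z, P z i j ∂μ = ((N : ℂ))⁻¹ * (1 : Matrix (Fin N) (Fin N) ℂ) i j)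
    (x : Fin N → ℂ) :
    ∫ z, eunorm (P z *ᵥ x) ^ 2 ∂μ = (N:ℝ)⁻¹ * eunorm x ^ 2 := by
  have h1 : (fun z => eunorm (P z *ᵥ x) ^ 2) =
      fun z => Complex.re (star x ⬝ᵥ (P z *ᵥ x)) := by
    funext z
    rw [← m_eq hherm hidem z x, Complex.ofReal_re]
  rw [h1]
  have h2 := integral_re (μ := μ) (f := fun z => star x ⬝ᵥ (P z *ᵥ x)) (q_int hint x x)
  rw [RCLike.re_eq_complex_re] at h2
  rw [h2, q_integral hint hres x x, dot_self_eq, ← Complex.ofReal_natCast,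
    ← Complex.ofReal_inv, ← Complex.ofReal_mul, Complex.ofReal_re]

lemma m_sum (hherm : ∀ z, (P z).IsHermitian) (hidem : ∀ z, P z * P z = P z)
    (hrank : ∀ z, (P z).trace = 1)
    (b : OrthonormalBasis (Fin N) ℂ (EuclideanSpace ℂ (Fin N))) (z : Z) :
    ∑ k, eunorm (P z *ᵥ ⇑(b k)) ^ 2 = 1 := by
  have h := onb_trace b (P z)
  rw [hrank z] at h
  have h2 : ((∑ k, eunorm (P z *ᵥ ⇑(b k)) ^ 2 : ℝ) : ℂ) = 1 := by
    rw [Complex.ofReal_sum, ← h]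
    exact Finset.sum_congr rfl fun k _ => m_eq hherm hidem z _
  exact_mod_cast h2

lemma m_le_one (hherm : ∀ z, (P z).IsHermitian) (hidem : ∀ z, P z * P z = P z)
    (z : Z) (x : Fin N → ℂ) :
    eunorm (P z *ᵥ x) ^ 2 ≤ eunorm x ^ 2 :=
  pow_le_pow_left₀ (eunorm_nonneg _) (proj_norm_le (hherm z) (hidem z) x) 2

lemma Pbound (hherm : ∀ z, (P z).IsHermitian) (hidem : ∀ z, P z * P z = P z)
    (z : Z) (j k : Fin N) : ‖P z j k‖ ≤ 1 := by
  rw [entry_eq (P z) j k]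
  refine (proj_dot_le (hherm z) (hidem z) _ _).trans ?_
  have h1 := (proj_norm_le (hherm z) (hidem z) (Pi.single j (1:ℂ))).trans_eq (eunorm_single j)
  have h2 := (proj_norm_le (hherm z) (hidem z) (Pi.single k (1:ℂ))).trans_eq (eunorm_single k)
  exact mul_le_one₀ h1 (eunorm_nonneg _) h2

lemma fP_int (hherm : ∀ z, (P z).IsHermitian) (hidem : ∀ z, P z * P z = P z)
    (hint : ∀ i j, Integrable (fun z => P z i j) μ)
    {f : Z → ℂ} (hf : Integrable f μ) (j k : Fin N) :
    Integrable (fun z => f z * P z j k) μ := by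
  refine (Integrable.bdd_mul (c := 1) hf (hint j k).aestronglyMeasurable
    (Filter.Eventually.of_forall fun z => Pbound hherm hidem z j k)).congr
    (Filter.Eventually.of_forall fun z => mul_comm _ _)
end Plumb2
section MainThm
variable {N : ℕ} {Z : Type*} [MeasurableSpace Z] {μ : Measure Z} [IsProbabilityMeasure μ]
  {P : Z → Matrix (Fin N) (Fin N) ℂ}

theorem op_bound (hN : 0 < N)
    (hint : ∀ i j, Integrable (fun z => P z i j) μ)
    (hherm : ∀ z, (P z).IsHermitian)
    (hidem : ∀ z, P z * P z = P z)
    (hrank : ∀ z, (P z).trace = 1)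
    (hres : ∀ i j, ∫ z, P z i j ∂μ = ((N : ℂ))⁻¹ * (1 : Matrix (Fin N) (Fin N) ℂ) i j)
    (p : ℝ≥0∞) (hp : 1 ≤ p)
    (f : Z → ℂ) (hf : Integrable f μ) (hfp : MemLp f p μ) :
    schattenNorm p (Matrix.of fun i j => (N : ℂ) * ∫ z, f z * P z i j ∂μ)
        ≤ (N : ℝ) ^ (1 / p).toReal * (eLpNorm f p μ).toReal := by
  classical
  have hNR : (0:ℝ) < N := by exact_mod_cast hN
  have hp0 : p ≠ 0 := (lt_of_lt_of_le zero_lt_one hp).ne'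
  have hNe : Nonempty (Fin N) := ⟨⟨0, hN⟩⟩
  set A : Matrix (Fin N) (Fin N) ℂ := Matrix.of fun i j => (N : ℂ) * ∫ z, f z * P z i j ∂μ
    with hAdef
  obtain ⟨b, w, hsvd⟩ := exists_svd A
  set s := singularValues A with hsdef
  set q : Fin N → Z → ℂ := fun i z => star ⇑(b i) ⬝ᵥ (P z *ᵥ ⇑(w i)) with hqdef
  set G : Fin N → Z → ℝ := fun i z => ‖q i z‖ with hGdef
  set c : Fin N → Z → ℝ :=
    fun i z => (eunorm (P z *ᵥ ⇑(b i)) ^ 2 + eunorm (P z *ᵥ ⇑(w i)) ^ 2) / 2 with hcdef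
  have hGc : ∀ i z, G i z ≤ c i z := fun i z => proj_dot_le' (hherm z) (hidem z) _ _
  have hG0 : ∀ i z, 0 ≤ G i z := fun i z => norm_nonneg _
  have hc0 : ∀ i z, 0 ≤ c i z := fun i z => le_trans (hG0 i z) (hGc i z)
  have hc1 : ∀ i z, c i z ≤ 1 := by
    intro i z
    have h1 := (m_le_one hherm hidem z ⇑(b i)).trans_eq (by rw [eunorm_onb])
    have h2 := (m_le_one hherm hidem z ⇑(w i)).trans_eq (by rw [eunorm_onb])
    rw [hcdef]
    simp only [one_pow] at h1 h2 ⊢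
    linarith
  have hG1 : ∀ i z, G i z ≤ 1 := fun i z => (hGc i z).trans (hc1 i z)
  have hcint : ∀ i, Integrable (c i) μ := fun i =>
    ((m_int hherm hidem hint _).add (m_int hherm hidem hint _)).div_const 2
  have hcI : ∀ i, ∫ z, c i z ∂μ = (N:ℝ)⁻¹ := by
    intro i
    rw [hcdef]
    simp only
    rw [integral_div, integral_add (m_int hherm hidem hint _) (m_int hherm hidem hint _),
      m_integral hherm hidem hint hres, m_integral hherm hidem hint hres,
      eunorm_onb, eunorm_onb]
    ring
  have hcsum : ∀ z, ∑ i, c i z = 1 := by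
    intro z
    have hb := m_sum hherm hidem hrank b z
    have hw := m_sum hherm hidem hrank w z
    rw [hcdef]
    simp only
    rw [← Finset.sum_div, Finset.sum_add_distrib, hb, hw]
    norm_num
  have hGm : ∀ i, AEStronglyMeasurable (G i) μ := fun i =>
    (q_int hint _ _).aestronglyMeasurable.norm
  have hGint : ∀ i, Integrable (G i) μ := fun i => (q_int hint _ _).norm
  have hGI : ∀ i, ∫ z, G i z ∂μ ≤ (N:ℝ)⁻¹ := fun i =>
    (integral_mono (hGint i) (hcint i) (hGc i)).trans_eq (hcI i)
  -- the singular value formula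
  have hfP : ∀ j k, Integrable (fun z => f z * P z j k) μ :=
    fun j k => fP_int hherm hidem hint hf j k
  have hs_eq : ∀ i, (s i : ℂ) = (N : ℂ) * ∫ z, f z * q i z ∂μ := by
    intro i
    have h1 : (s i : ℂ) = star ⇑(b i) ⬝ᵥ (A *ᵥ ⇑(w i)) := by
      rw [hsvd i]
      rw [dotProduct_smul]
      rw [dot_self_eq, eunorm_onb]
      norm_num
    rw [h1, q_expand]
    have h2 : ∀ j k, star (⇑(b i) j) * ⇑(w i) k * A j k
        = (N : ℂ) * ∫ z, star (⇑(b i) j) * ⇑(w i) k * (f z * P z j k) ∂μ := by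
      intro j k
      rw [hAdef]
      simp only [Matrix.of_apply]
      rw [MeasureTheory.integral_const_mul (star (⇑(b i) j) * ⇑(w i) k)]
      ring
    rw [Finset.sum_congr rfl fun j _ => Finset.sum_congr rfl fun k _ => h2 j k]
    have h3 : ∀ j, ∑ k, (N:ℂ) * ∫ z, star (⇑(b i) j) * ⇑(w i) k * (f z * P z j k) ∂μ
        = (N:ℂ) * ∫ z, ∑ k, star (⇑(b i) j) * ⇑(w i) k * (f z * P z j k) ∂μ := by
      intro j
      rw [← Finset.mul_sum, integral_finset_sum _ fun k _ => (hfP j k).const_mul _]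
    rw [Finset.sum_congr rfl fun j _ => h3 j, ← Finset.mul_sum,
      ← integral_finset_sum _ fun j _ => integrable_finset_sum _ fun k _ =>
        ((hfP j k).const_mul _)]
    congr 1
    refine integral_congr_ae (Filter.Eventually.of_forall fun z => ?_)
    rw [hqdef]
    simp only
    rw [q_expand, Finset.mul_sum]
    refine Finset.sum_congr rfl fun j _ => ?_
    rw [Finset.mul_sum]
    exact Finset.sum_congr rfl fun k _ => by ring
  have hfG_int : ∀ i, Integrable (fun z => ‖f z‖ * G i z) μ := by
    intro i
    refine (Integrable.bdd_mul (c := 1) hf.norm (hGm i) (Filter.Eventually.of_forall fun z => ?_)).congr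
      (Filter.Eventually.of_forall fun z => mul_comm _ _)
    rw [Real.norm_eq_abs, abs_of_nonneg (hG0 i z)]
    exact hG1 i z
  have hs_le : ∀ i, s i ≤ (N:ℝ) * ∫ z, ‖f z‖ * G i z ∂μ := by
    intro i
    have h0 : s i = ‖(s i : ℂ)‖ := by
      rw [Complex.norm_real, Real.norm_eq_abs, abs_of_nonneg (singularValues_nonneg A i)]
    rw [h0, hs_eq i]
    rw [norm_mul, Complex.norm_natCast]
    refine mul_le_mul_of_nonneg_left ?_ (le_of_lt hNR)
    refine (norm_integral_le_integral_norm _).trans_eq ?_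
    refine integral_congr_ae (Filter.Eventually.of_forall fun z => ?_)
    simp [hGdef, norm_mul]
  rcases eq_or_ne p ⊤ with hptop | hptop
  · -- p = ∞
    subst hptop
    set C := (eLpNorm f ⊤ μ).toReal with hCdef
    have hC0 : 0 ≤ C := ENNReal.toReal_nonneg
    have hfae : ∀ᵐ z ∂μ, ‖f z‖ ≤ C := by
      filter_upwards [enorm_ae_le_eLpNormEssSup f μ] with z hz
      have hfin : eLpNormEssSup f μ ≠ ⊤ := by
        rw [← eLpNorm_exponent_top]
        exact hfp.2.ne
      have := ENNReal.toReal_mono hfin hz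
      simpa [hCdef, eLpNorm_exponent_top] using this
    have hsC : ∀ i, s i ≤ C := by
      intro i
      refine (hs_le i).trans ?_
      have hmono : ∫ z, ‖f z‖ * G i z ∂μ ≤ ∫ z, C * c i z ∂μ := by
        refine integral_mono_ae (hfG_int i) ((hcint i).const_mul C) ?_
        filter_upwards [hfae] with z hz
        exact mul_le_mul hz (hGc i z) (hG0 i z) hC0
      refine (mul_le_mul_of_nonneg_left hmono (le_of_lt hNR)).trans_eq ?_
      rw [MeasureTheory.integral_const_mul, hcI i]
      field_simp
    rw [schattenNorm, if_pos rfl]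
    have h1 : (1 / (⊤:ℝ≥0∞)).toReal = 0 := by simp
    rw [h1, Real.rpow_zero, one_mul]
    exact ciSup_le hsC
  · -- p finite
    set pR := p.toReal with hpRdef
    have hpR1 : 1 ≤ pR := by
      rw [hpRdef, ← ENNReal.toReal_one]
      exact ENNReal.toReal_mono hptop hp
    have hpR0 : 0 < pR := lt_of_lt_of_le zero_lt_one hpR1
    have hFmem : MemLp (fun z => ‖f z‖) (ENNReal.ofReal pR) μ := by
      rw [hpRdef, ENNReal.ofReal_toReal hptop]
      exact hfp.norm
    have hFpow_int : Integrable (fun z => ‖f z‖ ^ pR) μ :=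
      hfp.integrable_norm_rpow hp0 hptop
    have hFG2_int : ∀ i, Integrable (fun z => ‖f z‖ ^ pR * G i z) μ := by
      intro i
      refine (Integrable.bdd_mul (c := 1) hFpow_int (hGm i) (Filter.Eventually.of_forall fun z => ?_)).congr
        (Filter.Eventually.of_forall fun z => mul_comm _ _)
      rw [Real.norm_eq_abs, abs_of_nonneg (hG0 i z)]
      exact hG1 i z
    have key : ∀ i, s i ^ pR ≤ (N:ℝ) * ∫ z, ‖f z‖ ^ pR * G i z ∂μ := by
      intro i
      have h1 : s i ^ pR ≤ ((N:ℝ) * ∫ z, ‖f z‖ * G i z ∂μ) ^ pR :=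
        Real.rpow_le_rpow (singularValues_nonneg A i) (hs_le i) (le_of_lt hpR0)
      have hInn : (0:ℝ) ≤ ∫ z, ‖f z‖ * G i z ∂μ :=
        integral_nonneg fun z => mul_nonneg (norm_nonneg _) (hG0 i z)
      rw [Real.mul_rpow (le_of_lt hNR) hInn] at h1
      have h2 := integral_holder hpR1 (fun z => norm_nonneg (f z)) (hG0 i) (hG1 i) hFmem (hGm i)
      have hXnn : (0:ℝ) ≤ ∫ z, ‖f z‖ ^ pR * G i z ∂μ :=
        integral_nonneg fun z => mul_nonneg (Real.rpow_nonneg (norm_nonneg _) _) (hG0 i z)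
      have h3 : (∫ z, G i z ∂μ) ^ (pR - 1) ≤ ((N:ℝ)⁻¹) ^ (pR - 1) :=
        Real.rpow_le_rpow (integral_nonneg (hG0 i)) (hGI i) (by linarith)
      have h4 : (∫ z, ‖f z‖ * G i z ∂μ) ^ pR
          ≤ (∫ z, ‖f z‖ ^ pR * G i z ∂μ) * ((N:ℝ)⁻¹) ^ (pR - 1) :=
        h2.trans (mul_le_mul_of_nonneg_left h3 hXnn)
      have h5 : (N:ℝ) ^ pR * ((N:ℝ)⁻¹) ^ (pR - 1) = N := by
        rw [Real.inv_rpow (le_of_lt hNR), ← Real.rpow_neg (le_of_lt hNR),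
          ← Real.rpow_add hNR]
        norm_num
      calc s i ^ pR ≤ (N:ℝ) ^ pR * (∫ z, ‖f z‖ * G i z ∂μ) ^ pR := h1
        _ ≤ (N:ℝ) ^ pR * ((∫ z, ‖f z‖ ^ pR * G i z ∂μ) * ((N:ℝ)⁻¹) ^ (pR - 1)) :=
            mul_le_mul_of_nonneg_left h4 (Real.rpow_nonneg (le_of_lt hNR) _)
        _ = (N:ℝ) ^ pR * ((N:ℝ)⁻¹) ^ (pR - 1) * (∫ z, ‖f z‖ ^ pR * G i z ∂μ) := by ring
        _ = (N:ℝ) * ∫ z, ‖f z‖ ^ pR * G i z ∂μ := by rw [h5]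
    have hsum : ∑ i, s i ^ pR ≤ (N:ℝ) * ∫ z, ‖f z‖ ^ pR ∂μ := by
      refine (Finset.sum_le_sum fun i _ => key i).trans ?_
      rw [← Finset.mul_sum]
      refine mul_le_mul_of_nonneg_left ?_ (le_of_lt hNR)
      rw [← integral_finset_sum _ fun i _ => hFG2_int i]
      refine integral_mono (integrable_finset_sum _ fun i _ => hFG2_int i) hFpow_int ?_
      intro z
      show ∑ i, ‖f z‖ ^ pR * G i z ≤ ‖f z‖ ^ pR
      rw [← Finset.mul_sum]
      refine mul_le_of_le_one_right (Real.rpow_nonneg (norm_nonneg _) _) ?_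
      calc ∑ i, G i z ≤ ∑ i, c i z := Finset.sum_le_sum fun i _ => hGc i z
        _ = 1 := hcsum z
    -- conclude
    rw [schattenNorm, if_neg hptop]
    have hlp : (eLpNorm f p μ).toReal = (∫ z, ‖f z‖ ^ pR ∂μ) ^ pR⁻¹ := by
      rw [hfp.eLpNorm_eq_integral_rpow_norm hp0 hptop]
      exact ENNReal.toReal_ofReal (Real.rpow_nonneg
        (integral_nonneg fun z => Real.rpow_nonneg (norm_nonneg _) _) _)
    rw [hlp]
    have h1p : (1 / p).toReal = pR⁻¹ := by
      rw [one_div, ENNReal.toReal_inv]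
    rw [h1p]
    have hs0 : (0:ℝ) ≤ ∑ i, s i ^ pR :=
      Finset.sum_nonneg fun i _ => Real.rpow_nonneg (singularValues_nonneg A i) _
    calc (∑ i, s i ^ pR) ^ (1 / pR)
        ≤ ((N:ℝ) * ∫ z, ‖f z‖ ^ pR ∂μ) ^ (1 / pR) :=
          Real.rpow_le_rpow hs0 hsum (by positivity)
      _ = (N:ℝ) ^ pR⁻¹ * (∫ z, ‖f z‖ ^ pR ∂μ) ^ pR⁻¹ := by
          rw [one_div, Real.mul_rpow (le_of_lt hNR)
            (integral_nonneg fun z => Real.rpow_nonneg (norm_nonneg _) _)]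
end MainThm
section MainThm2
variable {N : ℕ} {Z : Type*} [MeasurableSpace Z] {μ : Measure Z} [IsProbabilityMeasure μ]
  {P : Z → Matrix (Fin N) (Fin N) ℂ}

theorem hus_bound (hN : 0 < N)
    (hint : ∀ i j, Integrable (fun z => P z i j) μ)
    (hherm : ∀ z, (P z).IsHermitian)
    (hidem : ∀ z, P z * P z = P z)
    (hrank : ∀ z, (P z).trace = 1)
    (hres : ∀ i j, ∫ z, P z i j ∂μ = ((N : ℂ))⁻¹ * (1 : Matrix (Fin N) (Fin N) ℂ) i j)
    (p : ℝ≥0∞) (hp : 1 ≤ p) (T : Matrix (Fin N) (Fin N) ℂ) :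
    (eLpNorm (fun z => (T * P z).trace) p μ).toReal
        ≤ ((N : ℝ) ^ (1 / p).toReal)⁻¹ * schattenNorm p T := by
  classical
  have hNR : (0:ℝ) < N := by exact_mod_cast hN
  have hp0 : p ≠ 0 := (lt_of_lt_of_le zero_lt_one hp).ne'
  have hNe : Nonempty (Fin N) := ⟨⟨0, hN⟩⟩
  obtain ⟨b, w, hsvd⟩ := exists_svd T
  set s := singularValues T with hsdef
  have hs0 : ∀ k, 0 ≤ s k := fun k => singularValues_nonneg T k
  set q : Fin N → Z → ℂ := fun k z => star ⇑(w k) ⬝ᵥ (P z *ᵥ ⇑(b k)) with hqdef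
  set c : Fin N → Z → ℝ :=
    fun k z => (eunorm (P z *ᵥ ⇑(w k)) ^ 2 + eunorm (P z *ᵥ ⇑(b k)) ^ 2) / 2 with hcdef
  have hqc : ∀ k z, ‖q k z‖ ≤ c k z := fun k z => proj_dot_le' (hherm z) (hidem z) _ _
  have hc0 : ∀ k z, 0 ≤ c k z := fun k z => le_trans (norm_nonneg _) (hqc k z)
  have hc1 : ∀ k z, c k z ≤ 1 := by
    intro k z
    have h1 := (m_le_one hherm hidem z ⇑(w k)).trans_eq (by rw [eunorm_onb])
    have h2 := (m_le_one hherm hidem z ⇑(b k)).trans_eq (by rw [eunorm_onb])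
    rw [hcdef]
    simp only [one_pow] at h1 h2 ⊢
    linarith
  have hcint : ∀ k, Integrable (c k) μ := fun k =>
    ((m_int hherm hidem hint _).add (m_int hherm hidem hint _)).div_const 2
  have hcI : ∀ k, ∫ z, c k z ∂μ = (N:ℝ)⁻¹ := by
    intro k
    rw [hcdef]
    simp only
    rw [integral_div, integral_add (m_int hherm hidem hint _) (m_int hherm hidem hint _),
      m_integral hherm hidem hint hres, m_integral hherm hidem hint hres,
      eunorm_onb, eunorm_onb]
    ring
  have hcsum : ∀ z, ∑ k, c k z = 1 := by
    intro z
    have hb := m_sum hherm hidem hrank b z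
    have hw := m_sum hherm hidem hrank w z
    rw [hcdef]
    simp only
    rw [← Finset.sum_div, Finset.sum_add_distrib, hb, hw]
    norm_num
  have tr_eq : ∀ z, (T * P z).trace = ∑ k, (s k : ℂ) * q k z := by
    intro z
    rw [Matrix.trace_mul_comm, ← onb_trace w (P z * T)]
    refine Finset.sum_congr rfl fun k _ => ?_
    rw [← Matrix.mulVec_mulVec, hsvd k, Matrix.mulVec_smul, dotProduct_smul]
    rw [hqdef]
    simp
  have htr_int : Integrable (fun z => (T * P z).trace) μ := by
    refine (integrable_finset_sum _ fun k (_ : k ∈ Finset.univ) =>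
      (q_int hint ⇑(w k) ⇑(b k)).const_mul ((s k : ℂ))).congr ?_
    exact Filter.Eventually.of_forall fun z => (tr_eq z).symm
  have hbound : ∀ z, ‖(T * P z).trace‖ ≤ ∑ k, s k * c k z := by
    intro z
    rw [tr_eq z]
    refine (norm_sum_le _ _).trans (Finset.sum_le_sum fun k _ => ?_)
    rw [norm_mul, Complex.norm_real, Real.norm_eq_abs, abs_of_nonneg (hs0 k)]
    exact mul_le_mul_of_nonneg_left (hqc k z) (hs0 k)
  have hboundS : ∀ z, ‖(T * P z).trace‖ ≤ ∑ k, s k := by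
    intro z
    refine (hbound z).trans (Finset.sum_le_sum fun k _ => ?_)
    exact mul_le_of_le_one_right (hs0 k) (hc1 k z)
  rcases eq_or_ne p ⊤ with hptop | hptop
  · -- p = ∞
    subst hptop
    set S0 := ⨆ k, s k with hS0def
    have hS0nn : 0 ≤ S0 := Real.iSup_nonneg hs0
    have hsS0 : ∀ k, s k ≤ S0 := fun k => le_ciSup (Set.Finite.bddAbove (Set.finite_range s)) k
    have hbS0 : ∀ z, ‖(T * P z).trace‖ ≤ S0 := by
      intro z
      refine (hbound z).trans ?_
      calc ∑ k, s k * c k z ≤ ∑ k, S0 * c k z :=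
            Finset.sum_le_sum fun k _ => mul_le_mul_of_nonneg_right (hsS0 k) (hc0 k z)
        _ = S0 * ∑ k, c k z := by rw [Finset.mul_sum]
        _ = S0 := by rw [hcsum z, mul_one]
    have h1 := eLpNorm_le_of_ae_bound (μ := μ) (p := (⊤:ℝ≥0∞))
      (f := fun z => (T * P z).trace) (Filter.Eventually.of_forall hbS0)
    rw [measure_univ] at h1
    rw [ENNReal.one_rpow, one_mul] at h1
    have h2 := ENNReal.toReal_mono ENNReal.ofReal_ne_top h1
    rw [ENNReal.toReal_ofReal hS0nn] at h2
    refine h2.trans ?_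
    rw [schattenNorm, if_pos rfl]
    simp
    exact le_rfl
  · -- p finite
    set pR := p.toReal with hpRdef
    have hpR1 : 1 ≤ pR := by
      rw [hpRdef, ← ENNReal.toReal_one]
      exact ENNReal.toReal_mono hptop hp
    have hpR0 : 0 < pR := lt_of_lt_of_le zero_lt_one hpR1
    have hptw : ∀ z, ‖(T * P z).trace‖ ^ pR ≤ ∑ k, s k ^ pR * c k z := by
      intro z
      have h1 : ‖(T * P z).trace‖ ^ pR ≤ (∑ k, s k * c k z) ^ pR :=
        Real.rpow_le_rpow (norm_nonneg _) (hbound z) (le_of_lt hpR0)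
      refine h1.trans ?_
      have h2 := sum_holder hpR1 s (fun k => c k z) hs0 (fun k => hc0 k z)
      rwa [hcsum z, Real.one_rpow, mul_one] at h2
    have hAESM : AEStronglyMeasurable (fun z => ‖(T * P z).trace‖ ^ pR) μ :=
      (Real.continuous_rpow_const (le_of_lt hpR0)).comp_aestronglyMeasurable
        htr_int.aestronglyMeasurable.norm
    have hnp_int : Integrable (fun z => ‖(T * P z).trace‖ ^ pR) μ := by
      refine (integrable_const ((∑ k, s k) ^ pR)).mono' hAESM ?_
      refine Filter.Eventually.of_forall fun z => ?_
      rw [Real.norm_eq_abs, abs_of_nonneg (Real.rpow_nonneg (norm_nonneg _) _)]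
      exact Real.rpow_le_rpow (norm_nonneg _) (hboundS z) (le_of_lt hpR0)
    have hIbound : ∫ z, ‖(T * P z).trace‖ ^ pR ∂μ ≤ (N:ℝ)⁻¹ * ∑ k, s k ^ pR := by
      have h1 : ∫ z, ‖(T * P z).trace‖ ^ pR ∂μ ≤ ∫ z, ∑ k, s k ^ pR * c k z ∂μ :=
        integral_mono hnp_int
          (integrable_finset_sum _ fun k _ => (hcint k).const_mul _) hptw
      refine h1.trans_eq ?_
      rw [integral_finset_sum _ fun k _ => (hcint k).const_mul _]
      rw [Finset.sum_congr rfl fun k (_ : k ∈ Finset.univ) => by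
        rw [MeasureTheory.integral_const_mul, hcI k]]
      rw [← Finset.sum_mul, mul_comm]
    have hmem : MemLp (fun z => (T * P z).trace) p μ :=
      MemLp.of_bound htr_int.aestronglyMeasurable _ (Filter.Eventually.of_forall hboundS)
    have hlp : (eLpNorm (fun z => (T * P z).trace) p μ).toReal
        = (∫ z, ‖(T * P z).trace‖ ^ pR ∂μ) ^ pR⁻¹ := by
      rw [hmem.eLpNorm_eq_integral_rpow_norm hp0 hptop]
      exact ENNReal.toReal_ofReal (Real.rpow_nonneg
        (integral_nonneg fun z => Real.rpow_nonneg (norm_nonneg _) _) _)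
    rw [hlp, schattenNorm, if_neg hptop]
    have h1p : (1 / p).toReal = pR⁻¹ := by rw [one_div, ENNReal.toReal_inv]
    rw [h1p]
    have hXnn : (0:ℝ) ≤ ∫ z, ‖(T * P z).trace‖ ^ pR ∂μ :=
      integral_nonneg fun z => Real.rpow_nonneg (norm_nonneg _) _
    calc (∫ z, ‖(T * P z).trace‖ ^ pR ∂μ) ^ pR⁻¹
        ≤ ((N:ℝ)⁻¹ * ∑ k, s k ^ pR) ^ pR⁻¹ :=
          Real.rpow_le_rpow hXnn hIbound (by positivity)
      _ = ((N:ℝ)⁻¹) ^ pR⁻¹ * (∑ k, s k ^ pR) ^ pR⁻¹ := by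
          rw [Real.mul_rpow (by positivity)
            (Finset.sum_nonneg fun k _ => Real.rpow_nonneg (hs0 k) _)]
      _ = ((N:ℝ) ^ pR⁻¹)⁻¹ * (∑ k, s k ^ pR) ^ (1 / pR) := by
          rw [Real.inv_rpow (le_of_lt hNR), one_div]
end MainThm2


/-- Norm bounds for the quantization and Husimi maps:
‖Op[f]‖_{S^p} ≤ d_m^{1/p} ‖f‖_{L^p} and ‖Hus[T]‖_{L^p} ≤ d_m^{-1/p} ‖T‖_{S^p}. -/
theorem op_hus_schatten_bounds (N : ℕ) (hN : 0 < N)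
    {Z : Type*} [MeasurableSpace Z] (μ : Measure Z) [IsProbabilityMeasure μ]
    (P : Z → Matrix (Fin N) (Fin N) ℂ)
    (hint : ∀ i j, Integrable (fun z => P z i j) μ)
    (hherm : ∀ z, (P z).IsHermitian)
    (hidem : ∀ z, P z * P z = P z)
    (hrank : ∀ z, (P z).trace = 1)
    (hres : ∀ i j, ∫ z, P z i j ∂μ = ((N : ℂ))⁻¹ * (1 : Matrix (Fin N) (Fin N) ℂ) i j)
    (p : ℝ≥0∞) (hp : 1 ≤ p)
    (f : Z → ℂ) (hf : Integrable f μ) (hfp : MemLp f p μ)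
    (T : Matrix (Fin N) (Fin N) ℂ) :
    schattenNorm p (Matrix.of fun i j => (N : ℂ) * ∫ z, f z * P z i j ∂μ)
        ≤ (N : ℝ) ^ (1 / p).toReal * (eLpNorm f p μ).toReal
    ∧ (eLpNorm (fun z => (T * P z).trace) p μ).toReal
        ≤ ((N : ℝ) ^ (1 / p).toReal)⁻¹ * schattenNorm p T := by
  exact ⟨op_bound hN hint hherm hidem hrank hres p hp f hf hfp,
    hus_bound hN hint hherm hidem hrank hres p hp T⟩
end

section
/- For integers d ≥ 2, m ≥ 0 and 0 ≤ n ≤ m: ∏_{k=1}^∞ (1 − n(n+d-1)/((m+k)(m+k+d-1))) = m!(m+d-1)! / ((m-n)!(m+d-1+n)!), and for n > m the infinite product equals 0. -/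
open Filter Finset Real Topology

lemma fact_pos_real (a : ℕ) : (0:ℝ) < a.factorial := by exact_mod_cast a.factorial_pos

lemma fact_add_eq (a b : ℕ) :
    ((a + b).factorial : ℝ) = (a.factorial : ℝ) * ∏ i ∈ Finset.range b, ((a : ℝ) + i + 1) := by
  induction b with
  | zero => simp
  | succ b ih =>
      rw [Finset.prod_range_succ, show a + (b + 1) = (a + b) + 1 from rfl, Nat.factorial_succ]
      push_cast
      rw [ih]
      ring

lemma ratio_tendsto (A B : ℝ) (hB : 0 < B) :
    Tendsto (fun K : ℕ => ((K:ℝ) + A) / ((K:ℝ) + B)) atTop (𝓝 1) := by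
  have hBt : Tendsto (fun K : ℕ => (K:ℝ) + B) atTop atTop :=
    tendsto_atTop_add_const_right _ B tendsto_natCast_atTop_atTop
  have h0 : Tendsto (fun K : ℕ => (A - B) / ((K:ℝ) + B)) atTop (𝓝 0) :=
    tendsto_const_nhds.div_atTop hBt
  have h1 := (tendsto_const_nhds (x := (1:ℝ))).add h0
  rw [add_zero] at h1
  apply h1.congr
  intro K
  have : (K:ℝ) + B ≠ 0 := by positivity
  field_simp
  ring

set_option maxHeartbeats 1000000 in
lemma key (n c e : ℕ) :
    HasProd
      (fun k : ℕ => 1 - ((n:ℝ) * ((n:ℝ) + e + 1)) /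
        (((n:ℝ) + c + k + 1) * ((n:ℝ) + c + k + e + 2)))
      ((((n+c).factorial : ℝ) * ((n+c+e+1).factorial : ℝ)) /
        (((c).factorial : ℝ) * ((n+n+c+e+1).factorial : ℝ))) := by
  set f : ℕ → ℝ := fun k => 1 - ((n:ℝ) * ((n:ℝ) + e + 1)) /
      (((n:ℝ) + c + k + 1) * ((n:ℝ) + c + k + e + 2)) with hf
  have hn : (0:ℝ) ≤ n := Nat.cast_nonneg n
  have hc : (0:ℝ) ≤ c := Nat.cast_nonneg c
  have he : (0:ℝ) ≤ e := Nat.cast_nonneg e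
  have hak : ∀ k : ℕ, f k = (((c:ℝ) + k + 1) * ((n:ℝ) + n + c + k + e + 2)) /
      (((n:ℝ) + c + k + 1) * ((n:ℝ) + c + k + e + 2)) := by
    intro k
    have h1 : (0:ℝ) < (n:ℝ) + c + k + 1 := by positivity
    have h2 : (0:ℝ) < (n:ℝ) + c + k + e + 2 := by positivity
    rw [hf]
    field_simp
    ring
  have hpos : ∀ k : ℕ, 0 < f k := by
    intro k; rw [hak]; positivity
  have hle : ∀ k : ℕ, f k ≤ 1 := by
    intro k; rw [hf]
    have : (0:ℝ) ≤ ((n:ℝ) * ((n:ℝ) + e + 1)) /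
        (((n:ℝ) + c + k + 1) * ((n:ℝ) + c + k + e + 2)) := by positivity
    linarith
  have hlow : ∀ k : ℕ, 1 / ((n:ℝ) + c + 1) ≤ f k := by
    intro k
    have hk : (0:ℝ) ≤ k := Nat.cast_nonneg k
    rw [hak, div_le_div_iff₀ (by positivity) (by positivity)]
    have hA : (n:ℝ) + c + k + 1 ≤ ((c:ℝ) + k + 1) * ((n:ℝ) + c + 1) := by
      nlinarith [mul_nonneg hc hn, mul_nonneg hc hc, mul_nonneg hk hn, mul_nonneg hk hc]
    have hB2 : (n:ℝ) + c + k + e + 2 ≤ (n:ℝ) + n + c + k + e + 2 := by linarith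
    nlinarith [mul_le_mul hA hB2 (by positivity) (by positivity)]
  -- summability of logs
  have hsum2 : Summable (fun k : ℕ => 1 / ((k:ℝ) + 1) ^ 2) := by
    have h0 : Summable (fun k : ℕ => 1 / ((k:ℝ)) ^ 2) :=
      summable_one_div_nat_pow.mpr one_lt_two
    have h1 := (summable_nat_add_iff 1).mpr h0
    apply h1.congr
    intro k
    push_cast
    ring
  set C : ℝ := ((n:ℝ) + c + 1) * ((n:ℝ) * ((n:ℝ) + e + 1)) with hC
  have hbound : ∀ k : ℕ, ‖Real.log (f k)‖ ≤ C * (1 / ((k:ℝ) + 1) ^ 2) := by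
    intro k
    have hk : (0:ℝ) ≤ k := Nat.cast_nonneg k
    have hg := hpos k
    have hg1 := hle k
    rw [Real.norm_eq_abs, abs_of_nonpos (Real.log_nonpos hg.le hg1)]
    have h1 : 1 - (f k)⁻¹ ≤ Real.log (f k) := Real.one_sub_inv_le_log_of_pos hg
    have h2 : (f k)⁻¹ ≤ (n:ℝ) + c + 1 := by
      have := inv_anti₀ (show (0:ℝ) < 1 / ((n:ℝ) + c + 1) by positivity) (hlow k)
      simpa using this
    have h3 : 1 - f k ≤ ((n:ℝ) * ((n:ℝ) + e + 1)) * (1 / ((k:ℝ) + 1) ^ 2) := by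
      have hD : ((k:ℝ) + 1) ^ 2 ≤ ((n:ℝ) + c + k + 1) * ((n:ℝ) + c + k + e + 2) := by
        nlinarith [mul_nonneg hn hk, mul_nonneg hc hk, mul_nonneg hn hc]
      rw [hf]
      have h4 : ((n:ℝ) * ((n:ℝ) + e + 1)) / (((n:ℝ) + c + k + 1) * ((n:ℝ) + c + k + e + 2))
          ≤ ((n:ℝ) * ((n:ℝ) + e + 1)) / ((k:ℝ) + 1) ^ 2 :=
        div_le_div_of_nonneg_left (by positivity) (by positivity) hD
      rw [mul_one_div]
      linarith
    have h5 : (f k)⁻¹ - 1 = (f k)⁻¹ * (1 - f k) := by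
      field_simp
    have h6 : (f k)⁻¹ * (1 - f k) ≤ ((n:ℝ) + c + 1) * (1 - f k) :=
      mul_le_mul_of_nonneg_right h2 (by linarith)
    have h7 : ((n:ℝ) + c + 1) * (1 - f k) ≤ ((n:ℝ) + c + 1) *
        (((n:ℝ) * ((n:ℝ) + e + 1)) * (1 / ((k:ℝ) + 1) ^ 2)) :=
      mul_le_mul_of_nonneg_left h3 (by positivity)
    calc -Real.log (f k) ≤ (f k)⁻¹ - 1 := by linarith
      _ ≤ C * (1 / ((k:ℝ) + 1) ^ 2) := by rw [h5, hC]; nlinarith [h6, h7]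
  have hslog : Summable (fun k : ℕ => Real.log (f k)) :=
    Summable.of_norm_bounded (hsum2.mul_left C) hbound
  have hmult : Multipliable f := by
    have hpr := hslog.hasSum.rexp
    rw [show (rexp ∘ fun k => Real.log (f k)) = f from
      funext fun k => Real.exp_log (hpos k)] at hpr
    exact ⟨_, hpr⟩
  rw [hmult.hasProd_iff_tendsto_nat]
  -- closed form of partial products
  have hclosed : ∀ K : ℕ, ∏ i ∈ Finset.range K, f i =
      (((n+c).factorial : ℝ) * ((n+c+e+1).factorial : ℝ) * ((c+K).factorial : ℝ) *
        ((n+n+c+K+e+1).factorial : ℝ)) /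
      (((c).factorial : ℝ) * ((n+n+c+e+1).factorial : ℝ) * ((n+c+K).factorial : ℝ) *
        ((n+c+K+e+1).factorial : ℝ)) := by
    intro K
    induction K with
    | zero =>
        simp only [Finset.range_zero, Finset.prod_empty, Nat.add_zero]
        rw [eq_comm, div_eq_one_iff_eq (ne_of_gt (mul_pos (mul_pos (mul_pos
          (fact_pos_real _) (fact_pos_real _)) (fact_pos_real _)) (fact_pos_real _)))]
        ring
    | succ K ih =>
        rw [Finset.prod_range_succ, ih, hak K]
        have e1 : ((c+(K+1)).factorial : ℝ) = ((c:ℝ)+K+1) * ((c+K).factorial : ℝ) := by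
          rw [show c+(K+1) = (c+K)+1 by ring, Nat.factorial_succ]; push_cast; ring
        have e2 : ((n+n+c+(K+1)+e+1).factorial : ℝ) =
            ((n:ℝ)+n+c+K+e+2) * ((n+n+c+K+e+1).factorial : ℝ) := by
          rw [show n+n+c+(K+1)+e+1 = (n+n+c+K+e+1)+1 by ring, Nat.factorial_succ]; push_cast; ring
        have e3 : ((n+c+(K+1)).factorial : ℝ) = ((n:ℝ)+c+K+1) * ((n+c+K).factorial : ℝ) := by
          rw [show n+c+(K+1) = (n+c+K)+1 by ring, Nat.factorial_succ]; push_cast; ring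
        have e4 : ((n+c+(K+1)+e+1).factorial : ℝ) =
            ((n:ℝ)+c+K+e+2) * ((n+c+K+e+1).factorial : ℝ) := by
          rw [show n+c+(K+1)+e+1 = (n+c+K+e+1)+1 by ring, Nat.factorial_succ]; push_cast; ring
        rw [e1, e2, e3, e4]
        have p1 := fact_pos_real (c+K)
        have p2 := fact_pos_real (n+n+c+K+e+1)
        have p3 := fact_pos_real (n+c+K)
        have p4 := fact_pos_real (n+c+K+e+1)
        have p5 := fact_pos_real c
        have p6 := fact_pos_real (n+n+c+e+1)
        have q1 : (0:ℝ) < (n:ℝ)+c+K+1 := by positivity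
        have q2 : (0:ℝ) < (n:ℝ)+c+K+e+2 := by positivity
        field_simp
  -- rewrite partial products and take the limit
  have hsplit : ∀ K : ℕ, ∏ i ∈ Finset.range K, f i =
      ((((n+c).factorial : ℝ) * ((n+c+e+1).factorial : ℝ)) /
        (((c).factorial : ℝ) * ((n+n+c+e+1).factorial : ℝ))) *
      ∏ i ∈ Finset.range n, (((K:ℝ) + ((n:ℝ)+c+e+2+i)) / ((K:ℝ) + ((c:ℝ)+1+i))) := by
    intro K
    rw [hclosed K]
    have g1 : ((n+c+K).factorial : ℝ) =
        ((c+K).factorial : ℝ) * ∏ i ∈ Finset.range n, ((c:ℝ) + K + i + 1) := by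
      rw [show n+c+K = (c+K)+n by ring]
      rw [fact_add_eq (c+K) n]
      congr 1
      exact Finset.prod_congr rfl fun i _ => by push_cast; ring
    have g2 : ((n+n+c+K+e+1).factorial : ℝ) =
        ((n+c+K+e+1).factorial : ℝ) * ∏ i ∈ Finset.range n, ((n:ℝ)+c+K+e+1 + i + 1) := by
      rw [show n+n+c+K+e+1 = (n+c+K+e+1)+n by ring]
      rw [fact_add_eq (n+c+K+e+1) n]
      congr 1
      exact Finset.prod_congr rfl fun i _ => by push_cast; ring
    rw [g1, g2, Finset.prod_div_distrib]
    have hp1 : ∏ i ∈ Finset.range n, ((K:ℝ) + ((n:ℝ)+c+e+2+i)) =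
        ∏ i ∈ Finset.range n, ((n:ℝ)+c+K+e+1 + i + 1) := by
      apply Finset.prod_congr rfl; intro i _; ring
    have hp2 : ∏ i ∈ Finset.range n, ((K:ℝ) + ((c:ℝ)+1+i)) =
        ∏ i ∈ Finset.range n, ((c:ℝ) + K + i + 1) := by
      apply Finset.prod_congr rfl; intro i _; ring
    rw [hp1, hp2]
    have hP2pos : (0:ℝ) < ∏ i ∈ Finset.range n, ((c:ℝ) + K + i + 1) :=
      Finset.prod_pos fun i _ => by positivity
    have hP1pos : (0:ℝ) < ∏ i ∈ Finset.range n, ((n:ℝ)+c+K+e+1 + i + 1) :=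
      Finset.prod_pos fun i _ => by positivity
    have p1 := fact_pos_real (c+K)
    have p4 := fact_pos_real (n+c+K+e+1)
    have p5 := fact_pos_real c
    have p6 := fact_pos_real (n+n+c+e+1)
    rw [div_mul_div_comm, div_eq_div_iff (by positivity) (by positivity)]
    ring
  have hR : Tendsto (fun K : ℕ =>
      ∏ i ∈ Finset.range n, (((K:ℝ) + ((n:ℝ)+c+e+2+i)) / ((K:ℝ) + ((c:ℝ)+1+i))))
      atTop (𝓝 (∏ i ∈ Finset.range n, (1:ℝ))) := by
    apply tendsto_finset_prod
    intro i _
    exact ratio_tendsto ((n:ℝ)+c+e+2+i) ((c:ℝ)+1+i) (by positivity)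
  rw [Finset.prod_const_one] at hR
  have hfin := (tendsto_const_nhds (x := ((((n+c).factorial : ℝ) * ((n+c+e+1).factorial : ℝ)) /
        (((c).factorial : ℝ) * ((n+n+c+e+1).factorial : ℝ))))).mul hR
  rw [mul_one] at hfin
  exact hfin.congr fun K => (hsplit K).symm

lemma hasProd_zero_of_exists {f : ℕ → ℝ} (h : ∃ k, f k = 0) : HasProd f 0 := by
  obtain ⟨j, hj⟩ := h
  show Filter.Tendsto (fun s : Finset ℕ => ∏ i ∈ s, f i) Filter.atTop (nhds 0)
  apply Filter.Tendsto.congr' _ tendsto_const_nhds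
  filter_upwards [Filter.eventually_ge_atTop ({j} : Finset ℕ)] with s hs
  exact (Finset.prod_eq_zero (Finset.singleton_subset_iff.mp hs) hj).symm

/-- For 0 ≤ n ≤ m the infinite product ∏_{k≥1}(1 − n(n+d-1)/((m+k)(m+k+d-1)))
equals m!(m+d-1)!/((m-n)!(m+d-1+n)!), and for n > m it equals 0. -/
theorem product_eigenvalue_formula (d m n : ℕ) (hd : 2 ≤ d) :
    HasProd (fun k : ℕ => 1 - ((n * (n + d - 1) : ℕ) : ℝ) / ((m + k + 1) * (m + k + d)))
      (if n ≤ m then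
        ((Nat.factorial m * Nat.factorial (m + d - 1) : ℕ) : ℝ) /
          ((Nat.factorial (m - n) * Nat.factorial (m + d - 1 + n) : ℕ) : ℝ)
       else 0) := by
  obtain ⟨e, rfl⟩ : ∃ e, d = e + 2 := ⟨d - 2, by omega⟩
  by_cases h : n ≤ m
  · rw [if_pos h]
    obtain ⟨c, rfl⟩ : ∃ c, m = n + c := ⟨m - n, by omega⟩
    rw [show n + c + (e + 2) - 1 = n + c + e + 1 by omega,
        show n + c - n = c by omega,
        show n + (e + 2) - 1 = n + e + 1 by omega,
        show n + c + e + 1 + n = n + n + c + e + 1 by omega]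
    convert key n c e using 1
    · funext k
      push_cast
      ring
    · push_cast
      ring
  · rw [if_neg h]
    obtain ⟨j, rfl⟩ : ∃ j, n = m + j + 1 := ⟨n - m - 1, by omega⟩
    apply hasProd_zero_of_exists
    refine ⟨j, ?_⟩
    rw [show m + j + 1 + (e + 2) - 1 = m + j + (e+2) by omega]
    push_cast
    have hX : ((m:ℝ) + j + 1) * ((m:ℝ) + j + (e+2)) ≠ 0 := by positivity
    field_simp
    simp
end
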